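/- Let Y have MGF φ_Y with φ_Y(2x) − (φ_Y(x/2))² > 0 for a given x > 0, and suppose x satisfies φ_Y(9x/2) − 3φ_Y(x/2)φ_Y(2x) + 2(φ_Y(x/2))³ = η·(φ_Y(2x) − (φ_Y(x/2))²)^{3/2} for some η > 0. Define s = √x, m = (1/2)·ln(σ²/(φ_Y(2x) − (φ_Y(x/2))²)), τ = μ − σ·φ_Y(x/2)/(φ_Y(2x) − (φ_Y(x/2))²)^{1/2}, for given μ ∈ ℝ, σ > 0. Then for N standard normal independent of Y, W = e^{s√Y·N+m} + τ satisfies E[W] = μ, Var(W) = σ², and E[(W−μ)³]/σ³ = η, provided φ_Y(9x/2) < ∞. -/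

import Mathlib

/-!
Conditionally on `Y`, the variable `k s √Y N` is a centred Gaussian of variance `k² x Y`, so
`E[e^{k s √Y N}] = E[e^{k² x Y / 2}] = φ_Y(k² x / 2)`; for `k = 1, 2, 3` these are `φ_Y(x/2)`,
`φ_Y(2x)` and `φ_Y(9x/2)`. With `Z = e^{s √Y N}` the choice of `τ` makes `W - μ = e^m (Z - φ_Y(x/2))`,
so the `k`-th central moment of `W` is `e^{km}` times that of `Z`, and `e^m = σ / √(φ_Y(2x) - φ_Y(x/2)²)`
turns these into `σ²` and `η σ³`.
-/

open MeasureTheory ProbabilityTheory Real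
open scoped NNReal

section CentralMoments

variable {Ω : Type*} [MeasurableSpace Ω] {P : Measure Ω} [IsProbabilityMeasure P] {Z : Ω → ℝ}

lemma integral_sub_const_sq (h₁ : Integrable Z P) (h₂ : Integrable (fun ω => Z ω ^ 2) P)
    (c : ℝ) : ∫ ω, (Z ω - c) ^ 2 ∂P = ∫ ω, Z ω ^ 2 ∂P - 2 * c * ∫ ω, Z ω ∂P + c ^ 2 := by
  have hexpand (ω : Ω) : (Z ω - c) ^ 2 = Z ω ^ 2 - 2 * c * Z ω + c ^ 2 := by ring
  have h₂₁ : Integrable (fun ω => Z ω ^ 2 - 2 * c * Z ω) P := h₂.sub (h₁.const_mul _)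
  simp only [hexpand]
  rw [integral_add h₂₁ (integrable_const _), integral_sub h₂ (h₁.const_mul _),
    integral_const_mul, integral_const, probReal_univ, one_smul]

lemma integral_sub_const_cube (h₁ : Integrable Z P) (h₂ : Integrable (fun ω => Z ω ^ 2) P)
    (h₃ : Integrable (fun ω => Z ω ^ 3) P) (c : ℝ) :
    ∫ ω, (Z ω - c) ^ 3 ∂P
      = ∫ ω, Z ω ^ 3 ∂P - 3 * c * ∫ ω, Z ω ^ 2 ∂P + 3 * c ^ 2 * ∫ ω, Z ω ∂P - c ^ 3 := by
  have hexpand (ω : Ω) :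
      (Z ω - c) ^ 3 = Z ω ^ 3 - 3 * c * Z ω ^ 2 + 3 * c ^ 2 * Z ω - c ^ 3 := by
    ring
  have h₃₂ : Integrable (fun ω => Z ω ^ 3 - 3 * c * Z ω ^ 2) P := h₃.sub (h₂.const_mul _)
  have h₃₂₁ : Integrable (fun ω => Z ω ^ 3 - 3 * c * Z ω ^ 2 + 3 * c ^ 2 * Z ω) P :=
    h₃₂.add (h₁.const_mul _)
  simp only [hexpand]
  rw [integral_sub h₃₂₁ (integrable_const _), integral_add h₃₂ (h₁.const_mul _),
    integral_sub h₃ (h₂.const_mul _), integral_const_mul, integral_const_mul, integral_const,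
    probReal_univ, one_smul]

end CentralMoments

namespace ProbabilityTheory

variable {Ω : Type*} [MeasurableSpace Ω] {P : Measure Ω} [IsProbabilityMeasure P] {Y N : Ω → ℝ}

lemma IndepFun.integrable_and_integral_exp_mul_gaussianReal (hindep : IndepFun Y N P)
    (hY : AEMeasurable Y P) {a : ℝ} {v : ℝ≥0} (hN : P.map N = gaussianReal a v) {f : ℝ → ℝ}
    (hf : Measurable f) (hint : Integrable (fun ω => exp (a * f (Y ω) + v * f (Y ω) ^ 2 / 2)) P) :
    Integrable (fun ω => exp (f (Y ω) * N ω)) P ∧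
      ∫ ω, exp (f (Y ω) * N ω) ∂P = ∫ ω, exp (a * f (Y ω) + v * f (Y ω) ^ 2 / 2) ∂P := by
  have hNm : AEMeasurable N P := aemeasurable_of_map_neZero (by rw [hN]; infer_instance)
  have hmap : P.map (fun ω => (Y ω, N ω)) = (P.map Y).prod (gaussianReal a v) :=
    hN ▸ hindep.map_prod_eq_prod_map_map hY hNm
  set g : ℝ × ℝ → ℝ := fun p => exp (f p.1 * p.2)
  have hg : Measurable g := by fun_prop
  have hinner (y : ℝ) : ∫ n, g (y, n) ∂gaussianReal a v = exp (a * f y + v * f y ^ 2 / 2) :=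
    mgf_gaussianReal (X := id) (by simp) (f y)
  have hh : Measurable fun y => exp (a * f y + v * f y ^ 2 / 2) := by fun_prop
  have hint_map : Integrable (fun y => exp (a * f y + v * f y ^ 2 / 2)) (P.map Y) :=
    (integrable_map_measure hh.aestronglyMeasurable hY).mpr hint
  have hg_int : Integrable g ((P.map Y).prod (gaussianReal a v)) := by
    refine (integrable_prod_iff hg.aestronglyMeasurable).mpr
      ⟨ae_of_all _ fun y => integrable_exp_mul_gaussianReal (f y), ?_⟩
    refine hint_map.congr (ae_of_all _ fun y => ?_)
    simp only [g, Real.norm_of_nonneg (exp_pos _).le]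
    exact (hinner y).symm
  have hYN : AEMeasurable (fun ω => (Y ω, N ω)) P := hY.prodMk hNm
  refine ⟨(integrable_map_measure hg.aestronglyMeasurable hYN).mp (hmap ▸ hg_int), ?_⟩
  calc ∫ ω, g (Y ω, N ω) ∂P
      = ∫ y, ∫ n, g (y, n) ∂gaussianReal a v ∂P.map Y := by
        rw [← integral_map hYN hg.aestronglyMeasurable, hmap, integral_prod g hg_int]
    _ = ∫ ω, exp (a * f (Y ω) + v * f (Y ω) ^ 2 / 2) ∂P := by
        simp only [hinner]
        exact integral_map hY hh.aestronglyMeasurable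

lemma integrable_and_integral_exp_mul_sqrt_mul_gaussianReal_pow (hindep : IndepFun Y N P)
    (hY : AEMeasurable Y P) (hY_nonneg : ∀ᵐ ω ∂P, 0 ≤ Y ω) (hN : P.map N = gaussianReal 0 1)
    (c t : ℝ) (k : ℕ) (ht : k ^ 2 * c ^ 2 / 2 = t)
    (hint : Integrable (fun ω => exp (t * Y ω)) P) :
    Integrable (fun ω => exp (c * √(Y ω) * N ω) ^ k) P ∧
      ∫ ω, exp (c * √(Y ω) * N ω) ^ k ∂P = mgf Y P t := by
  have hpow (ω : Ω) : exp (c * √(Y ω) * N ω) ^ k = exp (k * c * √(Y ω) * N ω) := by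
    rw [← exp_nat_mul]
    ring_nf
  have hexp : ∀ᵐ ω ∂P, exp (t * Y ω)
      = exp (0 * (k * c * √(Y ω)) + (1 : ℝ≥0) * (k * c * √(Y ω)) ^ 2 / 2) := by
    filter_upwards [hY_nonneg] with ω hω
    rw [← ht, mul_pow, mul_pow, sq_sqrt hω]
    push_cast
    ring_nf
  obtain ⟨hI, hE⟩ := hindep.integrable_and_integral_exp_mul_gaussianReal hY hN
    (f := fun y => k * c * √y) (by fun_prop) (hint.congr hexp)
  simp only [hpow]
  exact ⟨hI, hE.trans (integral_congr_ae hexp).symm⟩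

end ProbabilityTheory

lemma rpow_three_div_two_eq_sqrt_pow_three {d : ℝ} (hd : 0 ≤ d) :
    d ^ ((3 : ℝ) / 2) = √d ^ 3 := by
  rw [sqrt_eq_rpow, ← rpow_mul_natCast hd]
  norm_num

theorem mixed_moment_match_general
    {Ω : Type*} [MeasurableSpace Ω] (P : Measure Ω) [IsProbabilityMeasure P]
    (Y N : Ω → ℝ) (hY : Measurable Y)
    (hYpos : ∀ᵐ ω ∂P, 0 ≤ Y ω)
    (hindep : IndepFun Y N P)
    (hN : Measure.map N P = gaussianReal 0 1)
    (μ σ η x : ℝ) (hσ : 0 < σ) (hx : 0 < x)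
    (hint1 : Integrable (fun ω => Real.exp (x / 2 * Y ω)) P)
    (hint2 : Integrable (fun ω => Real.exp (2 * x * Y ω)) P)
    (hint3 : Integrable (fun ω => Real.exp (9 * x / 2 * Y ω)) P)
    (hpos : 0 < mgf Y P (2 * x) - (mgf Y P (x / 2)) ^ 2)
    (heq : mgf Y P (9 * x / 2) - 3 * mgf Y P (x / 2) * mgf Y P (2 * x)
        + 2 * (mgf Y P (x / 2)) ^ 3
      = η * (mgf Y P (2 * x) - (mgf Y P (x / 2)) ^ 2) ^ ((3 : ℝ) / 2))
    (s m τ : ℝ)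
    (hs : s = Real.sqrt x)
    (hm : m = (1 / 2)
        * Real.log (σ ^ 2 / (mgf Y P (2 * x) - (mgf Y P (x / 2)) ^ 2)))
    (hτ : τ = μ - σ * mgf Y P (x / 2)
        / (mgf Y P (2 * x) - (mgf Y P (x / 2)) ^ 2) ^ ((1 : ℝ) / 2)) :
    (∫ ω, (Real.exp (s * Real.sqrt (Y ω) * N ω + m) + τ) ∂P) = μ ∧
    (∫ ω, (Real.exp (s * Real.sqrt (Y ω) * N ω + m) + τ - μ) ^ 2 ∂P) = σ ^ 2 ∧
    (∫ ω, (Real.exp (s * Real.sqrt (Y ω) * N ω + m) + τ - μ) ^ 3 ∂P) / σ ^ 3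
      = η := by
  have hsx : s ^ 2 = x := hs ▸ sq_sqrt hx.le
  have moment (k : ℕ) (t : ℝ) (ht : k ^ 2 * x / 2 = t)
      (hint : Integrable (fun ω => exp (t * Y ω)) P) :=
    integrable_and_integral_exp_mul_sqrt_mul_gaussianReal_pow hindep hY.aemeasurable hYpos hN
      s t k (by rw [hsx]; exact ht) hint
  obtain ⟨hZ₁, hM₁⟩ := moment 1 (x / 2) (by ring) hint1
  obtain ⟨hZ₂, hM₂⟩ := moment 2 (2 * x) (by ring) hint2
  obtain ⟨hZ₃, hM₃⟩ := moment 3 (9 * x / 2) (by ring) hint3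
  simp only [pow_one] at hZ₁ hM₁
  set φ₁ := mgf Y P (x / 2)
  set φ₂ := mgf Y P (2 * x)
  set φ₃ := mgf Y P (9 * x / 2)
  set d := φ₂ - φ₁ ^ 2
  have hem : exp m = σ / √d := by
    rw [hm, one_div_mul_eq_div, exp_half, exp_log (div_pos (pow_pos hσ 2) hpos),
      sqrt_div' _ hpos.le, sqrt_sq hσ.le]
  have hW (ω : Ω) :
      exp (s * √(Y ω) * N ω + m) + τ - μ = exp m * (exp (s * √(Y ω) * N ω) - φ₁) := by
    rw [hτ, ← sqrt_eq_rpow, exp_add, hem]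
    ring
  refine ⟨?_, ?_, ?_⟩
  · have hW' (ω : Ω) :
        exp (s * √(Y ω) * N ω + m) + τ = exp m * (exp (s * √(Y ω) * N ω) - φ₁) + μ := by
      rw [← hW]
      ring
    have hint : Integrable (fun ω => exp m * (exp (s * √(Y ω) * N ω) - φ₁)) P :=
      (hZ₁.sub (integrable_const _)).const_mul _
    simp only [hW']
    rw [integral_add hint (integrable_const _), integral_const_mul,
      integral_sub hZ₁ (integrable_const _), hM₁]
    simp
  · simp only [hW, mul_pow]
    rw [integral_const_mul, integral_sub_const_sq hZ₁ hZ₂, hM₁, hM₂, hem]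
    field_simp
    linear_combination (-1) * sq_sqrt hpos.le
  · simp only [hW, mul_pow]
    rw [integral_const_mul, integral_sub_const_cube hZ₁ hZ₂ hZ₃, hM₁, hM₂, hM₃, hem]
    rw [rpow_three_div_two_eq_sqrt_pow_three hpos.le] at heq
    field_simp
    linear_combination heq

/-- Moment matching for the time-changed model: with `x > 0` solving the
moment-matching equation, `s = √x`, `m = ½ ln(σ²/(φ_Y(2x) − φ_Y(x/2)²))`,
`τ = μ − σ φ_Y(x/2)/(φ_Y(2x) − φ_Y(x/2)²)^{1/2}`, the variable
`W = e^{s√Y·N+m} + τ` has mean `μ`, variance `σ²`, and skewness `η`. -/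
theorem mixed_moment_match
    {Ω : Type*} [MeasurableSpace Ω] (P : Measure Ω) [IsProbabilityMeasure P]
    (Y N : Ω → ℝ) (hY : Measurable Y) (hNmeas : Measurable N)
    (hYpos : ∀ᵐ ω ∂P, 0 ≤ Y ω)
    (hindep : IndepFun Y N P)
    (hN : Measure.map N P = gaussianReal 0 1)
    (μ σ η x : ℝ) (hσ : 0 < σ) (hη : 0 < η) (hx : 0 < x)
    (hint1 : Integrable (fun ω => Real.exp (x / 2 * Y ω)) P)
    (hint2 : Integrable (fun ω => Real.exp (2 * x * Y ω)) P)
    (hint3 : Integrable (fun ω => Real.exp (9 * x / 2 * Y ω)) P)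
    (hpos : 0 < mgf Y P (2 * x) - (mgf Y P (x / 2)) ^ 2)
    (heq : mgf Y P (9 * x / 2) - 3 * mgf Y P (x / 2) * mgf Y P (2 * x)
        + 2 * (mgf Y P (x / 2)) ^ 3
      = η * (mgf Y P (2 * x) - (mgf Y P (x / 2)) ^ 2) ^ ((3 : ℝ) / 2))
    (s m τ : ℝ)
    (hs : s = Real.sqrt x)
    (hm : m = (1 / 2)
        * Real.log (σ ^ 2 / (mgf Y P (2 * x) - (mgf Y P (x / 2)) ^ 2)))
    (hτ : τ = μ - σ * mgf Y P (x / 2)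
        / (mgf Y P (2 * x) - (mgf Y P (x / 2)) ^ 2) ^ ((1 : ℝ) / 2)) :
    (∫ ω, (Real.exp (s * Real.sqrt (Y ω) * N ω + m) + τ) ∂P) = μ ∧
    (∫ ω, (Real.exp (s * Real.sqrt (Y ω) * N ω + m) + τ - μ) ^ 2 ∂P) = σ ^ 2 ∧
    (∫ ω, (Real.exp (s * Real.sqrt (Y ω) * N ω + m) + τ - μ) ^ 3 ∂P) / σ ^ 3
      = η :=
  mixed_moment_match_general P Y N hY hYpos hindep hN μ σ η x hσ hx hint1 hint2 hint3 hpos heq s m τ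
    hs hm hτ
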